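/- arXiv:math/0402102 — 3 statements merged into one kernel-verified Lean document; each statement's English description precedes it below -/
import Mathlib

section
/- Fix a natural number q ≥ 1. Suppose that for every natural number m there is given an element ρ_m of F satisfying ρ_m ∼ y^{q+m+1}, that is, ρ_m = u_m · y^{q+m+1} + σ_m where u_m is a unit of R and σ_m lies in the R-span of the monomials x^i y^j z^k with j < q+m+1. Let S be the R-submodule of F generated by the elements x^i y^m z^k (z − x) for all i, k, m ≥ 0 together with the elements x^i ρ_m for all i, m ≥ 0. Then the images of the monomials in the set {x^l y^m : l ≥ 0, 0 ≤ m ≤ q} span the quotient R-module F/S. (This is the 'sufficient relations' half of the paper's Proposition: the relations x^i z^k r(y^m Z) and x^i r(y^m Y_q) eliminate all basis elements of K(H) outside {x^l y^m : m ≤ q}.) -/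
open MvPolynomial

/-- `R` is the Laurent polynomial ring `ℤ[t,t⁻¹]`. -/
noncomputable abbrev R : Type := LaurentPolynomial ℤ

/-- `F` is the polynomial ring `R[x,y,z]`, with `x = X 0`, `y = X 1`, `z = X 2`,
regarded as an `R`-module with basis the monomials `x^l y^m z^n`. -/
noncomputable abbrev F : Type := MvPolynomial (Fin 3) R

set_option maxHeartbeats 1000000 in
/-- Fix `q ≥ 1`.  Suppose for every `m` we are given `ρ m ∼ y^{q+m+1}`, i.e.
`ρ m = u_m • y^{q+m+1} + σ_m` with `u_m` a unit of `R` and `σ_m` in the `R`-span of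
the monomials `x^i y^j z^k` with `j < q+m+1`.  Let `S` be the `R`-submodule of `F`
generated by the elements `x^i y^m z^k (z − x)` together with the elements `x^i ρ_m`.
Then the images of the monomials `{x^l y^m : m ≤ q}` span `F ⧸ S`. -/
theorem images_span_quotient (q : ℕ) (hq : 1 ≤ q) (ρ : ℕ → F)
    (hρ : ∀ m : ℕ, ∃ u : Rˣ,
      ρ m - (u : R) • (X 1 : F) ^ (q + m + 1) ∈
        Submodule.span R
          {p : F | ∃ i j k : ℕ, j < q + m + 1 ∧ p = X 0 ^ i * X 1 ^ j * X 2 ^ k})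
    (S : Submodule R F)
    (hS : S = Submodule.span R
        ({p : F | ∃ i m k : ℕ, p = X 0 ^ i * X 1 ^ m * X 2 ^ k * (X 2 - X 0)} ∪
         {p : F | ∃ i m : ℕ, p = X 0 ^ i * ρ m})) :
    Submodule.span R
        {v : F ⧸ S | ∃ l m : ℕ, m ≤ q ∧
          v = Submodule.Quotient.mk ((X 0 : F) ^ l * X 1 ^ m)} = ⊤ := by
  classical
  set s : Set F := {p : F | ∃ l m : ℕ, m ≤ q ∧ p = X 0 ^ l * X 1 ^ m} with hs
  set T : Submodule R F := S ⊔ Submodule.span R s with hT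
  -- generators of S
  have hgen : ∀ i j k : ℕ, (X 0 : F) ^ i * X 1 ^ j * X 2 ^ k * (X 2 - X 0) ∈ S := by
    intro i j k
    rw [hS]
    exact Submodule.subset_span (Or.inl ⟨i, j, k, rfl⟩)
  have hgen2 : ∀ i m : ℕ, (X 0 : F) ^ i * ρ m ∈ S := by
    intro i m
    rw [hS]
    exact Submodule.subset_span (Or.inr ⟨i, m, rfl⟩)
  -- z reduction
  have redz : ∀ k i j : ℕ,
      (X 0 : F) ^ i * X 1 ^ j * X 2 ^ k - X 0 ^ (i + k) * X 1 ^ j ∈ S := by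
    intro k
    induction k with
    | zero => intro i j; simp
    | succ k ih =>
      intro i j
      have h1 := hgen i j k
      have h2 := ih (i + 1) j
      have heq : (X 0 : F) ^ i * X 1 ^ j * X 2 ^ (k + 1) - X 0 ^ (i + (k + 1)) * X 1 ^ j
          = (X 0 ^ i * X 1 ^ j * X 2 ^ k * (X 2 - X 0))
            + (X 0 ^ (i + 1) * X 1 ^ j * X 2 ^ k - X 0 ^ (i + 1 + k) * X 1 ^ j) := by
        ring
      rw [heq]
      exact Submodule.add_mem _ h1 h2
  -- main claim: every monomial is in T
  have key : ∀ j i k : ℕ, (X 0 : F) ^ i * X 1 ^ j * X 2 ^ k ∈ T := by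
    intro j
    induction j using Nat.strong_induction_on with
    | _ j ih =>
      have hxy : ∀ l : ℕ, (X 0 : F) ^ l * X 1 ^ j ∈ T := by
        intro l
        by_cases hjq : j ≤ q
        · exact Submodule.mem_sup_right (Submodule.subset_span ⟨l, j, hjq, rfl⟩)
        · have hm : q + (j - q - 1) + 1 = j := by omega
          obtain ⟨u, hu⟩ := hρ (j - q - 1)
          rw [hm] at hu
          have h1 : (X 0 : F) ^ l * ρ (j - q - 1) ∈ T :=
            Submodule.mem_sup_left (hgen2 l _)
          have h2 : (X 0 : F) ^ l * (ρ (j - q - 1) - (u : R) • (X 1 : F) ^ j) ∈ T := by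
            refine Submodule.span_induction
              (p := fun x _ => (X 0 : F) ^ l * x ∈ T) ?_ ?_ ?_ ?_ hu
            · rintro x ⟨i, jj, k, hjj, rfl⟩
              have heq : (X 0 : F) ^ l * (X 0 ^ i * X 1 ^ jj * X 2 ^ k)
                  = X 0 ^ (l + i) * X 1 ^ jj * X 2 ^ k := by ring
              rw [heq]
              exact ih jj hjj (l + i) k
            · simp
            · intro x y hx hy hx' hy'
              rw [mul_add]
              exact Submodule.add_mem _ hx' hy'
            · intro a x hx hx'
              rw [mul_smul_comm]
              exact Submodule.smul_mem _ _ hx'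
          have h3 : (u : R) • ((X 0 : F) ^ l * X 1 ^ j) ∈ T := by
            have heq : (u : R) • ((X 0 : F) ^ l * X 1 ^ j)
                = (X 0 : F) ^ l * ρ (j - q - 1)
                  - (X 0 : F) ^ l * (ρ (j - q - 1) - (u : R) • (X 1 : F) ^ j) := by
              rw [mul_sub, mul_smul_comm]
              ring
            rw [heq]
            exact Submodule.sub_mem _ h1 h2
          have : ((u⁻¹ : Rˣ) : R) • ((u : R) • ((X 0 : F) ^ l * X 1 ^ j))
              = (X 0 : F) ^ l * X 1 ^ j := by
            rw [smul_smul, Units.inv_mul, one_smul]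
          rw [← this]
          exact Submodule.smul_mem _ _ h3
      intro i k
      have h1 : (X 0 : F) ^ i * X 1 ^ j * X 2 ^ k
          = ((X 0 : F) ^ i * X 1 ^ j * X 2 ^ k - X 0 ^ (i + k) * X 1 ^ j)
            + X 0 ^ (i + k) * X 1 ^ j := by ring
      rw [h1]
      exact Submodule.add_mem _ (Submodule.mem_sup_left (redz k i j)) (hxy (i + k))
  -- T = ⊤
  have hT_top : T = ⊤ := by
    rw [eq_top_iff]
    intro p _
    rw [MvPolynomial.as_sum p]
    refine Submodule.sum_mem _ fun v _ => ?_
    have h1 : (monomial v (coeff v p) : F) = coeff v p • monomial v (1 : R) := by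
      rw [MvPolynomial.smul_monomial, smul_eq_mul, mul_one]
    have h2 : (monomial v (1 : R) : F) = X 0 ^ v 0 * X 1 ^ v 1 * X 2 ^ v 2 := by
      rw [MvPolynomial.monomial_eq, map_one, one_mul, Finsupp.prod_pow,
        Fin.prod_univ_three]
    rw [h1, h2]
    exact Submodule.smul_mem _ _ (key (v 1) (v 0) (v 2))
  -- pass to the quotient
  have himg : {v : F ⧸ S | ∃ l m : ℕ, m ≤ q ∧
      v = Submodule.Quotient.mk ((X 0 : F) ^ l * X 1 ^ m)} = S.mkQ '' s := by
    ext v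
    constructor
    · rintro ⟨l, m, hm, rfl⟩
      exact ⟨_, ⟨l, m, hm, rfl⟩, rfl⟩
    · rintro ⟨p, ⟨l, m, hm, rfl⟩, rfl⟩
      exact ⟨l, m, hm, rfl⟩
  rw [himg, ← Submodule.map_span, eq_top_iff]
  rintro v -
  obtain ⟨p, rfl⟩ := Submodule.mkQ_surjective S v
  have hp : p ∈ T := hT_top ▸ Submodule.mem_top
  rw [hT] at hp
  obtain ⟨a, ha, b, hb, rfl⟩ := Submodule.mem_sup.mp hp
  have hzero : S.mkQ a = 0 := (Submodule.Quotient.mk_eq_zero S).mpr ha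
  have : S.mkQ (a + b) = S.mkQ b := by rw [map_add, hzero, zero_add]
  rw [this]
  exact Submodule.mem_map_of_mem hb
end

section
/- Fix a natural number q ≥ 1. Suppose that for every natural number m there is given an element ρ_m of F satisfying ρ_m ∼ y^{q+m+1}, that is, ρ_m = u_m · y^{q+m+1} + σ_m where u_m is a unit of R and σ_m lies in the R-span of the monomials x^i y^j z^k with j < q+m+1. Let S be the R-submodule of F generated by the elements x^i y^m z^k (z − x) for all i, k, m ≥ 0 together with the elements x^i ρ_m for all i, m ≥ 0. Then the images in F/S of the monomials in the set {x^l y^m : l ≥ 0, 0 ≤ m ≤ q} are linearly independent over R; equivalently, the intersection of S with the R-span of {x^l y^m : l ≥ 0, 0 ≤ m ≤ q} is zero. -/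
/-!
Substituting `z = x` defines an algebra map `F → R[x][y]` that kills every relation
`x^i y^m z^k (z - x)` and sends `x^i ρ_m` into the `R[x]`-span of the images of the `ρ_m`.
Read as polynomials in `y` over `R[x]`, these images have degree `q + m + 1` with a unit
top coefficient, so a nonzero `R[x]`-combination of them has `y`-degree at least `q + 1`,
by looking at its largest index. Meanwhile `x^l y^m` with `m ≤ q` go to independent monomials
of `y`-degree at most `q`, so no nonzero combination of them lies in the image of `S`.
-/

open MvPolynomial

open scoped Polynomial

theorem Polynomial.eq_zero_of_mem_span_of_degree_lt {A : Type*} [Semiring A] {f : ℕ → A[X]}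
    {n : ℕ → ℕ} (hn : StrictMono n) (hdeg : ∀ m, (f m).degree ≤ n m)
    (hcoeff : ∀ m, (f m).coeff (n m) ∈ nonZeroDivisors A) {p : A[X]}
    (hp : p ∈ Submodule.span A (Set.range f)) (hpd : p.degree < n 0) : p = 0 := by
  obtain ⟨c, rfl⟩ := Finsupp.mem_span_range_iff_exists_finsupp.mp hp
  suffices c = 0 by simp [this]
  by_contra hc
  set m₀ := c.support.max' (Finsupp.support_nonempty_iff.mpr hc)
  have hm₀ : m₀ ∈ c.support := Finset.max'_mem _ _
  have htop : (c.sum fun m a => a • f m).coeff (n m₀) = c m₀ * (f m₀).coeff (n m₀) := by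
    rw [Finsupp.sum, Polynomial.finsetSum_coeff, Finset.sum_eq_single_of_mem m₀ hm₀]
    · simp
    · intro m hm hne
      have hlt : n m < n m₀ := hn (lt_of_le_of_ne (Finset.le_max' _ _ hm) hne)
      rw [Polynomial.coeff_smul, Polynomial.coeff_eq_zero_of_degree_lt
        ((hdeg m).trans_lt (by exact_mod_cast hlt)), smul_zero]
  have hvanish : (c.sum fun m a => a • f m).coeff (n m₀) = 0 :=
    Polynomial.coeff_eq_zero_of_degree_lt
      (hpd.trans_le (by exact_mod_cast hn.monotone (Nat.zero_le m₀)))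
  rw [htop, mul_right_mem_nonZeroDivisors_eq_zero_iff (hcoeff m₀)] at hvanish
  exact Finsupp.mem_support_iff.mp hm₀ hvanish

theorem Polynomial.linearIndependent_C_X_pow_mul_X_pow (A : Type*) [CommSemiring A] :
    LinearIndependent A fun lm : ℕ × ℕ =>
      (Polynomial.C (Polynomial.X ^ lm.1) * Polynomial.X ^ lm.2 : A[X][X]) := by
  convert ((Polynomial.basisMonomials A).smulTower
    (Polynomial.basisMonomials A[X])).linearIndependent using 1
  ext1 lm
  simp [Module.Basis.smulTower_apply, Polynomial.smul_eq_C_mul, Polynomial.X_pow_eq_monomial]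

theorem Polynomial.degree_lt_of_mem_span_C_X_pow_mul_X_pow {A : Type*} [CommSemiring A] {q : ℕ}
    {p : A[X][X]} (hp : p ∈ Submodule.span A (Set.range fun lm : ℕ × {m : ℕ // m ≤ q} =>
      Polynomial.C (Polynomial.X ^ lm.1) * Polynomial.X ^ (lm.2 : ℕ))) :
    p.degree < q + 1 := by
  suffices h : Submodule.span A (Set.range fun lm : ℕ × {m : ℕ // m ≤ q} =>
      Polynomial.C (Polynomial.X ^ lm.1) * Polynomial.X ^ (lm.2 : ℕ)) ≤
      (Polynomial.degreeLT A[X] (q + 1)).restrictScalars A by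
    exact_mod_cast Polynomial.mem_degreeLT.mp (h hp)
  rw [Submodule.span_le]
  rintro _ ⟨lm, rfl⟩
  exact Polynomial.mem_degreeLT.mpr ((Polynomial.degree_C_mul_X_pow_le _ _).trans_lt
    (by exact_mod_cast Nat.lt_succ_of_le lm.2.2))

section EvalZEqX

variable {A : Type*} [CommRing A]

noncomputable def evalZEqX : MvPolynomial (Fin 3) A →ₐ[A] A[X][X] :=
  aeval ![Polynomial.C Polynomial.X, Polynomial.X, Polynomial.C Polynomial.X]

@[simp] theorem evalZEqX_X_zero :
    evalZEqX (X 0 : MvPolynomial (Fin 3) A) = Polynomial.C Polynomial.X := by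
  simp [evalZEqX]

@[simp] theorem evalZEqX_X_one : evalZEqX (X 1 : MvPolynomial (Fin 3) A) = Polynomial.X := by
  simp [evalZEqX]

@[simp] theorem evalZEqX_X_two :
    evalZEqX (X 2 : MvPolynomial (Fin 3) A) = Polynomial.C Polynomial.X := by
  simp [evalZEqX]

theorem evalZEqX_monomial (i j k : ℕ) :
    evalZEqX ((X 0 : MvPolynomial (Fin 3) A) ^ i * X 1 ^ j * X 2 ^ k) =
      Polynomial.C (Polynomial.X ^ (i + k)) * Polynomial.X ^ j := by
  simp only [map_mul, map_pow, evalZEqX_X_zero, evalZEqX_X_one, evalZEqX_X_two, pow_add]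
  ring

theorem degree_evalZEqX_lt_of_mem_span {N : ℕ} {p : MvPolynomial (Fin 3) A}
    (hp : p ∈ Submodule.span A {p | ∃ i j k : ℕ, j < N ∧ p = X 0 ^ i * X 1 ^ j * X 2 ^ k}) :
    (evalZEqX p).degree < N := by
  suffices h : Submodule.span A {p | ∃ i j k : ℕ, j < N ∧ p = X 0 ^ i * X 1 ^ j * X 2 ^ k} ≤
      ((Polynomial.degreeLT A[X] N).restrictScalars A).comap evalZEqX.toLinearMap by
    exact Polynomial.mem_degreeLT.mp (h hp)
  rw [Submodule.span_le]
  rintro _ ⟨i, j, k, hj, rfl⟩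
  simp only [SetLike.mem_coe, Submodule.mem_comap, Submodule.restrictScalars_mem,
    AlgHom.toLinearMap_apply, Polynomial.mem_degreeLT, evalZEqX_monomial]
  exact (Polynomial.degree_C_mul_X_pow_le j _).trans_lt (by exact_mod_cast hj)

variable {f : MvPolynomial (Fin 3) A} {N : ℕ} {u : A}

theorem evalZEqX_eq_C_mul_X_pow_add
    (hf : f - u • X 1 ^ N ∈
      Submodule.span A {p | ∃ i j k : ℕ, j < N ∧ p = X 0 ^ i * X 1 ^ j * X 2 ^ k}) :
    ∃ g : A[X][X], g.degree < N ∧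
      evalZEqX f = Polynomial.C (Polynomial.C u) * Polynomial.X ^ N + g := by
  refine ⟨_, degree_evalZEqX_lt_of_mem_span hf, ?_⟩
  rw [map_sub, map_smul, map_pow, evalZEqX_X_one, Algebra.smul_def, Polynomial.algebraMap_apply,
    Polynomial.algebraMap_eq, add_sub_cancel]

theorem degree_evalZEqX_le
    (hf : f - u • X 1 ^ N ∈
      Submodule.span A {p | ∃ i j k : ℕ, j < N ∧ p = X 0 ^ i * X 1 ^ j * X 2 ^ k}) :
    (evalZEqX f).degree ≤ N := by
  obtain ⟨g, hg, hfg⟩ := evalZEqX_eq_C_mul_X_pow_add hf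
  rw [hfg]
  simpa using Polynomial.degree_add_le_of_le (Polynomial.degree_C_mul_X_pow_le N _) hg.le

theorem coeff_evalZEqX
    (hf : f - u • X 1 ^ N ∈
      Submodule.span A {p | ∃ i j k : ℕ, j < N ∧ p = X 0 ^ i * X 1 ^ j * X 2 ^ k}) :
    (evalZEqX f).coeff N = Polynomial.C u := by
  obtain ⟨g, hg, hfg⟩ := evalZEqX_eq_C_mul_X_pow_add hf
  rw [hfg, Polynomial.coeff_add, Polynomial.coeff_C_mul_X_pow, if_pos rfl,
    Polynomial.coeff_eq_zero_of_degree_lt hg, add_zero]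

theorem span_relations_le_comap_evalZEqX (ρ : ℕ → MvPolynomial (Fin 3) A) :
    Submodule.span A
        ({p | ∃ i m k : ℕ, p = X 0 ^ i * X 1 ^ m * X 2 ^ k * (X 2 - X 0)} ∪
         {p | ∃ i m : ℕ, p = X 0 ^ i * ρ m}) ≤
      ((Submodule.span A[X] (Set.range fun m => evalZEqX (ρ m))).restrictScalars A).comap
        evalZEqX.toLinearMap := by
  rw [Submodule.span_le]
  rintro _ (⟨i, m, k, rfl⟩ | ⟨i, m, rfl⟩) <;>
    simp only [SetLike.mem_coe, Submodule.mem_comap, Submodule.restrictScalars_mem,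
      AlgHom.toLinearMap_apply]
  · simp
  · rw [map_mul, map_pow, evalZEqX_X_zero, ← map_pow, ← Polynomial.smul_eq_C_mul]
    exact Submodule.smul_mem _ _ (Submodule.subset_span ⟨m, rfl⟩)

end EvalZEqX

theorem MvPolynomial.linearIndependent_mk_X_zero_pow_mul_X_one_pow {A : Type*} [CommRing A]
    (q : ℕ) (ρ : ℕ → MvPolynomial (Fin 3) A)
    (hρ : ∀ m : ℕ, ∃ u : Aˣ,
      ρ m - (u : A) • X 1 ^ (q + m + 1) ∈
        Submodule.span A {p | ∃ i j k : ℕ, j < q + m + 1 ∧ p = X 0 ^ i * X 1 ^ j * X 2 ^ k}) :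
    LinearIndependent A (fun lm : ℕ × {m : ℕ // m ≤ q} =>
      Submodule.Quotient.mk (p := Submodule.span A
          ({p | ∃ i m k : ℕ, p = X 0 ^ i * X 1 ^ m * X 2 ^ k * (X 2 - X 0)} ∪
           {p | ∃ i m : ℕ, p = X 0 ^ i * ρ m}))
        ((X 0 : MvPolynomial (Fin 3) A) ^ lm.1 * X 1 ^ (lm.2 : ℕ))) := by
  choose u hu using hρ
  set T := (Submodule.span A[X] (Set.range fun m => evalZEqX (ρ m))).restrictScalars A
  let w : ℕ × {m : ℕ // m ≤ q} → A[X][X] :=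
    fun lm => Polynomial.C (Polynomial.X ^ lm.1) * Polynomial.X ^ (lm.2 : ℕ)
  have hw : LinearIndependent A w :=
    (Polynomial.linearIndependent_C_X_pow_mul_X_pow A).comp (Prod.map id Subtype.val)
      (Function.injective_id.prodMap Subtype.val_injective)
  have hwT : Disjoint (Submodule.span A (Set.range w)) T := by
    rw [Submodule.disjoint_def]
    intro p hpw hpT
    refine Polynomial.eq_zero_of_mem_span_of_degree_lt (n := fun m => q + m + 1)
      (fun a b hab => by dsimp only; omega) (fun m => degree_evalZEqX_le (hu m))
      (fun m => ?_) hpT ?_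
    · rw [coeff_evalZEqX (hu m)]
      exact ((u m).isUnit.map Polynomial.C).mem_nonZeroDivisors
    · simpa using Polynomial.degree_lt_of_mem_span_C_X_pow_mul_X_pow hpw
  let ψ := Submodule.mapQ _ T evalZEqX.toLinearMap (span_relations_le_comap_evalZEqX ρ)
  have hψ : ψ ∘ (fun lm : ℕ × {m : ℕ // m ≤ q} =>
      Submodule.Quotient.mk ((X 0 : MvPolynomial (Fin 3) A) ^ lm.1 * X 1 ^ (lm.2 : ℕ))) =
      T.mkQ ∘ w := by
    ext1 lm
    simp [ψ, w]
  refine LinearIndependent.of_comp ψ ?_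
  rw [hψ]
  exact hw.map (by rwa [Submodule.ker_mkQ])

theorem images_linearIndependent_general (q : ℕ) (ρ : ℕ → F)
    (hρ : ∀ m : ℕ, ∃ u : Rˣ,
      ρ m - (u : R) • (X 1 : F) ^ (q + m + 1) ∈
        Submodule.span R
          {p : F | ∃ i j k : ℕ, j < q + m + 1 ∧ p = X 0 ^ i * X 1 ^ j * X 2 ^ k})
    (S : Submodule R F)
    (hS : S = Submodule.span R
        ({p : F | ∃ i m k : ℕ, p = X 0 ^ i * X 1 ^ m * X 2 ^ k * (X 2 - X 0)} ∪
         {p : F | ∃ i m : ℕ, p = X 0 ^ i * ρ m})) :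
    LinearIndependent R
      (fun lm : ℕ × {m : ℕ // m ≤ q} =>
        (Submodule.Quotient.mk ((X 0 : F) ^ lm.1 * X 1 ^ (lm.2 : ℕ)) : F ⧸ S)) := by
  subst hS
  exact MvPolynomial.linearIndependent_mk_X_zero_pow_mul_X_one_pow q ρ hρ

/-- Fix `q ≥ 1`.  Suppose for every `m` we are given `ρ m ∼ y^{q+m+1}`, i.e.
`ρ m = u_m • y^{q+m+1} + σ_m` with `u_m` a unit of `R` and `σ_m` in the `R`-span of
the monomials `x^i y^j z^k` with `j < q+m+1`.  Let `S` be the `R`-submodule of `F`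
generated by the elements `x^i y^m z^k (z − x)` together with the elements `x^i ρ_m`.
Then the images in `F ⧸ S` of the monomials `{x^l y^m : m ≤ q}` are linearly
independent over `R`. -/
theorem images_linearIndependent (q : ℕ) (hq : 1 ≤ q) (ρ : ℕ → F)
    (hρ : ∀ m : ℕ, ∃ u : Rˣ,
      ρ m - (u : R) • (X 1 : F) ^ (q + m + 1) ∈
        Submodule.span R
          {p : F | ∃ i j k : ℕ, j < q + m + 1 ∧ p = X 0 ^ i * X 1 ^ j * X 2 ^ k})
    (S : Submodule R F)
    (hS : S = Submodule.span R
        ({p : F | ∃ i m k : ℕ, p = X 0 ^ i * X 1 ^ m * X 2 ^ k * (X 2 - X 0)} ∪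
         {p : F | ∃ i m : ℕ, p = X 0 ^ i * ρ m})) :
    LinearIndependent R
      (fun lm : ℕ × {m : ℕ // m ≤ q} =>
        (Submodule.Quotient.mk ((X 0 : F) ^ lm.1 * X 1 ^ (lm.2 : ℕ)) : F ⧸ S)) :=
  images_linearIndependent_general q ρ hρ S hS
end

section
/- Fix a natural number q ≥ 1. Suppose that for every natural number m there is given an element ρ_m of F satisfying ρ_m ∼ y^{q+m+1}, that is, ρ_m = u_m · y^{q+m+1} + σ_m where u_m is a unit of R and σ_m lies in the R-span of the monomials x^i y^j z^k with j < q+m+1. Let S be the R-submodule of F generated by the elements x^i y^m z^k (z − x) for all i, k, m ≥ 0 together with the elements x^i ρ_m for all i, m ≥ 0. Then the quotient R-module F/S is free with basis the images of the monomials in the set {x^l y^m : l ≥ 0, 0 ≤ m ≤ q}. (This is the algebraic content of the paper's main Theorem: the Kauffman bracket skein module K(M_q) of the exterior M_q of a q-twist knot is a free ℤ[t,t⁻¹]-module with basis the cables {x^l y^m : m ≤ q}, where x is a meridian of the knot and y is the other component of the two-component link xy; the paper presents K(M_q) as K(H) modulo the handle-slide relations, which its Sections 4 and 5 reduce exactly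 to the submodule S above.) -/
/-!
Order the monomials `x^i y^m z^k` lexicographically by `(m, k)`, a well-founded order. Up to a
unit, every monomial outside `{x^l y^m : m ≤ q}` is the leading term of a generator of `S`:
`x^i y^m z^(k+1)` leads `x^i y^m z^k (z - x)` and `x^i y^(q+m+1)` leads `x^i ρ_m`. Replacing
those monomials by these relators and keeping the others is a unitriangular change of basis,
hence an automorphism of `F` (`1 - f` with `f` locally nilpotent). In the new basis `S` is the
span of a subset of the basis vectors, so the remaining ones, the cables `x^l y^m` with `m ≤ q`,
form a basis of `F ⧸ S`.
-/

open MvPolynomial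

open Submodule Set

theorem Module.End.bijective_one_sub_of_forall_exists_pow_apply_eq_zero {A V : Type*} [Ring A]
    [AddCommGroup V] [Module A V] {f : Module.End A V} (hf : ∀ v, ∃ n, (f ^ n) v = 0) :
    Function.Bijective ⇑(1 - f : Module.End A V) := by
  refine ⟨(injective_iff_map_eq_zero _).2 fun v hv => ?_, fun v => ?_⟩
  · obtain ⟨n, hn⟩ := hf v
    simpa [hv, hn, eq_comm] using congr($(geom_sum_mul_neg f n) v)
  · obtain ⟨n, hn⟩ := hf v
    exact ⟨(∑ i ∈ Finset.range n, f ^ i) v,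
      by simpa [hn] using congr($(mul_neg_geom_sum f n) v)⟩

section WellFounded

variable {A V ι : Type*} [CommRing A] [AddCommGroup V] [Module A V] {r : ι → ι → Prop}
  {g : ι → V}

theorem Module.End.exists_pow_apply_eq_zero_of_wellFounded (hr : WellFounded r)
    (hg : span A (range g) = ⊤) {f : Module.End A V}
    (hf : ∀ i, f (g i) ∈ span A (g '' {j | r j i})) (v : V) : ∃ n, (f ^ n) v = 0 := by
  -- `maxGenEigenspace 0` is the submodule of vectors killed by some power of `f`.
  have hmem : ∀ v, v ∈ f.maxGenEigenspace 0 ↔ ∃ n, (f ^ n) v = 0 := by simp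
  have hg_mem : ∀ i, g i ∈ f.maxGenEigenspace 0 := fun i => hr.induction i fun i ih => by
    have hfi : f (g i) ∈ f.maxGenEigenspace 0 :=
      span_le.2 (by rintro _ ⟨j, hj, rfl⟩; exact ih j hj) (hf i)
    obtain ⟨n, hn⟩ := (hmem _).1 hfi
    exact (hmem _).2 ⟨n + 1, by rw [pow_succ, Module.End.mul_apply, hn]⟩
  have htop : f.maxGenEigenspace 0 = ⊤ :=
    eq_top_iff.2 (hg ▸ span_le.2 (range_subset_iff.2 hg_mem))
  exact (hmem v).1 (htop ▸ mem_top)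

theorem bijective_of_sub_mem_span_wellFounded (hr : WellFounded r) (hg : span A (range g) = ⊤)
    {φ : Module.End A V} (hφ : ∀ i, g i - φ (g i) ∈ span A (g '' {j | r j i})) :
    Function.Bijective φ := by
  have h := Module.End.bijective_one_sub_of_forall_exists_pow_apply_eq_zero
    (Module.End.exists_pow_apply_eq_zero_of_wellFounded hr hg (f := 1 - φ) hφ)
  rwa [sub_sub_cancel] at h

end WellFounded

section QuotientBasis

variable {A V ι κ : Type*} [Ring A] [AddCommGroup V] [Module A V]

noncomputable def Module.Basis.quotientSpanCompl (b : Module.Basis ι A V) {s : κ → ι}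
    (hs : Function.Injective s) : Module.Basis κ A (V ⧸ span A (b '' (range s)ᶜ)) :=
  have hcompl : IsCompl (span A (b '' (range s)ᶜ)) (span A (range (b ∘ s))) := by
    rw [range_comp]
    exact b.linearIndependent.isCompl_span_image b.span_eq isCompl_compl.symm
  (Module.Basis.span (b.linearIndependent.comp s hs)).map
    (quotientEquivOfIsCompl _ _ hcompl).symm

@[simp]
theorem Module.Basis.quotientSpanCompl_apply (b : Module.Basis ι A V) {s : κ → ι}
    (hs : Function.Injective s) (k : κ) :
    b.quotientSpanCompl hs k = Submodule.Quotient.mk (b (s k)) := by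
  simp [Module.Basis.quotientSpanCompl]

end QuotientBasis

noncomputable def finThreeFinsuppEquiv : (Fin 3 →₀ ℕ) ≃ ℕ × ℕ × ℕ where
  toFun d := (d 0, d 1, d 2)
  invFun t := Finsupp.single 0 t.1 + Finsupp.single 1 t.2.1 + Finsupp.single 2 t.2.2
  left_inv d := by ext i; fin_cases i <;> simp
  right_inv t := by simp

noncomputable def MvPolynomial.monomialBasisFinThree (A : Type*) [CommSemiring A] :
    Module.Basis (ℕ × ℕ × ℕ) A (MvPolynomial (Fin 3) A) :=
  (basisMonomials (Fin 3) A).reindex finThreeFinsuppEquiv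

@[simp]
theorem MvPolynomial.monomialBasisFinThree_apply {A : Type*} [CommSemiring A]
    (t : ℕ × ℕ × ℕ) :
    monomialBasisFinThree A t = X 0 ^ t.1 * X 1 ^ t.2.1 * X 2 ^ t.2.2 := by
  simp [monomialBasisFinThree, finThreeFinsuppEquiv, X_pow_eq_monomial, monomial_mul]

namespace TwistKnot

noncomputable abbrev yDegreeLtSpan (n : ℕ) : Submodule R F :=
  span R {p : F | ∃ i j k : ℕ, j < n ∧ p = X 0 ^ i * X 1 ^ j * X 2 ^ k}

theorem X_zero_pow_mul_mem_span_lex_lt {n : ℕ} {p : F} (hp : p ∈ yDegreeLtSpan n) (i k : ℕ) :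
    X 0 ^ i * p ∈ span R (monomialBasisFinThree R '' {t | toLex t.2 < toLex (n, k)}) := by
  suffices h : yDegreeLtSpan n ≤
      (span R (monomialBasisFinThree R '' {t | toLex t.2 < toLex (n, k)})).comap
        (LinearMap.mulLeft R (X 0 ^ i)) by
    simpa only [mem_comap, LinearMap.mulLeft_apply] using h hp
  refine span_le.2 ?_
  rintro _ ⟨a, j, l, hj, rfl⟩
  rw [SetLike.mem_coe, mem_comap, LinearMap.mulLeft_apply]
  refine subset_span ⟨(i + a, j, l), Prod.Lex.toLex_lt_toLex.2 (Or.inl hj), ?_⟩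
  simp only [monomialBasisFinThree_apply, pow_add]
  ring

variable (q : ℕ) (ρ : ℕ → F) (u : ℕ → Rˣ)

/-- The element replacing the monomial with exponents `t` in the unitriangular change of basis. -/
noncomputable def relator : ℕ × ℕ × ℕ → F
  | (i, m, k + 1) => X 0 ^ i * X 1 ^ m * X 2 ^ k * (X 2 - X 0)
  | (i, m, 0) =>
    if q < m then (↑(u (m - (q + 1)))⁻¹ : R) • (X 0 ^ i * ρ (m - (q + 1)))
    else X 0 ^ i * X 1 ^ m

def cableExponent (lm : ℕ × {m : ℕ // m ≤ q}) : ℕ × ℕ × ℕ := (lm.1, lm.2, 0)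

variable {q ρ u}

theorem monomial_sub_relator_mem
    (hu : ∀ m, ρ m - (u m : R) • (X 1 : F) ^ (q + m + 1) ∈ yDegreeLtSpan (q + m + 1)) :
    ∀ t, monomialBasisFinThree R t - relator q ρ u t ∈
      span R (monomialBasisFinThree R '' {t' | toLex t'.2 < toLex t.2})
  | (i, m, k + 1) => subset_span ⟨(i + 1, m, k),
      Prod.Lex.toLex_lt_toLex.2 (Or.inr ⟨rfl, k.lt_succ_self⟩), by simp [relator]; ring⟩
  | (i, m, 0) => by
    by_cases hm : q < m
    · obtain ⟨n, rfl⟩ : ∃ n, m = q + n + 1 := ⟨m - (q + 1), by omega⟩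
      have hsub : monomialBasisFinThree R (i, q + n + 1, 0) - relator q ρ u (i, q + n + 1, 0) =
          -(↑(u n)⁻¹ : R) • (X 0 ^ i * (ρ n - (u n : R) • X 1 ^ (q + n + 1))) := by
        simp [relator, hm, mul_sub, smul_sub, smul_smul]
        abel
      rw [hsub]
      exact smul_mem _ _ (X_zero_pow_mul_mem_span_lex_lt (hu n) i 0)
    · simp [relator, hm]

theorem bijective_constr_relator
    (hu : ∀ m, ρ m - (u m : R) • (X 1 : F) ^ (q + m + 1) ∈ yDegreeLtSpan (q + m + 1)) :
    Function.Bijective ((monomialBasisFinThree R).constr ℕ (relator q ρ u)) :=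
  bijective_of_sub_mem_span_wellFounded (InvImage.wf (fun t => toLex t.2) wellFounded_lt)
    (monomialBasisFinThree R).span_eq fun t => by
      rw [Module.Basis.constr_basis]
      exact monomial_sub_relator_mem hu t

noncomputable def relatorBasis
    (hu : ∀ m, ρ m - (u m : R) • (X 1 : F) ^ (q + m + 1) ∈ yDegreeLtSpan (q + m + 1)) :
    Module.Basis (ℕ × ℕ × ℕ) R F :=
  (monomialBasisFinThree R).map (LinearEquiv.ofBijective _ (bijective_constr_relator hu))

theorem coe_relatorBasis
    (hu : ∀ m, ρ m - (u m : R) • (X 1 : F) ^ (q + m + 1) ∈ yDegreeLtSpan (q + m + 1)) :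
    ⇑(relatorBasis hu) = relator q ρ u :=
  funext fun t => by
    simp only [relatorBasis, Module.Basis.map_apply, LinearEquiv.ofBijective_apply,
      Module.Basis.constr_basis]

theorem cableExponent_injective : Function.Injective (cableExponent q) := by
  rintro ⟨l, m, hm⟩ ⟨l', m', hm'⟩ h
  simp_all [cableExponent]

theorem mem_range_cableExponent {t : ℕ × ℕ × ℕ} :
    t ∈ range (cableExponent q) ↔ t.2.2 = 0 ∧ t.2.1 ≤ q := by
  constructor
  · rintro ⟨⟨l, m, hm⟩, rfl⟩
    exact ⟨rfl, hm⟩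
  · obtain ⟨i, m, k⟩ := t
    rintro ⟨rfl, hm⟩
    exact ⟨(i, ⟨m, hm⟩), rfl⟩

theorem mem_compl_range_cableExponent {t : ℕ × ℕ × ℕ} :
    t ∈ (range (cableExponent q))ᶜ ↔ t.2.2 ≠ 0 ∨ q < t.2.1 := by
  rw [mem_compl_iff, mem_range_cableExponent, not_and_or, not_le]

theorem span_relator_image_compl_range_cableExponent :
    span R (relator q ρ u '' (range (cableExponent q))ᶜ) = span R
      ({p : F | ∃ i m k : ℕ, p = X 0 ^ i * X 1 ^ m * X 2 ^ k * (X 2 - X 0)} ∪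
        {p : F | ∃ i m : ℕ, p = X 0 ^ i * ρ m}) := by
  apply le_antisymm <;> refine span_le.2 ?_
  · rintro _ ⟨⟨i, m, _ | k⟩, ht, rfl⟩
    · have hm : q < m := (mem_compl_range_cableExponent.1 ht).resolve_left (absurd rfl)
      simp only [relator, if_pos hm]
      exact smul_mem _ _ (subset_span (Or.inr ⟨i, _, rfl⟩))
    · exact subset_span (Or.inl ⟨i, m, k, rfl⟩)
  · rintro _ (⟨i, m, k, rfl⟩ | ⟨i, m, rfl⟩)
    · exact subset_span
        ⟨(i, m, k + 1), mem_compl_range_cableExponent.2 (Or.inl k.succ_ne_zero), rfl⟩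
    · have hρ : X 0 ^ i * ρ m = (u m : R) • relator q ρ u (i, q + m + 1, 0) := by
        simp [relator, smul_smul]
      rw [hρ]
      have hq : q < q + m + 1 := by omega
      exact smul_mem _ _
        (subset_span ⟨(i, q + m + 1, 0), mem_compl_range_cableExponent.2 (Or.inr hq), rfl⟩)

end TwistKnot

open TwistKnot

theorem skein_module_twist_knot_free_general (q : ℕ) (ρ : ℕ → F)
    (hρ : ∀ m : ℕ, ∃ u : Rˣ,
      ρ m - (u : R) • (X 1 : F) ^ (q + m + 1) ∈
        Submodule.span R
          {p : F | ∃ i j k : ℕ, j < q + m + 1 ∧ p = X 0 ^ i * X 1 ^ j * X 2 ^ k})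
    (S : Submodule R F)
    (hS : S = Submodule.span R
        ({p : F | ∃ i m k : ℕ, p = X 0 ^ i * X 1 ^ m * X 2 ^ k * (X 2 - X 0)} ∪
         {p : F | ∃ i m : ℕ, p = X 0 ^ i * ρ m})) :
    ∃ b : Module.Basis (ℕ × {m : ℕ // m ≤ q}) R (F ⧸ S),
      ∀ lm : ℕ × {m : ℕ // m ≤ q},
        b lm = Submodule.Quotient.mk ((X 0 : F) ^ lm.1 * X 1 ^ (lm.2 : ℕ)) := by
  choose u hu using hρ
  obtain rfl : S = span R (relatorBasis hu '' (range (cableExponent q))ᶜ) := by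
    rw [hS, coe_relatorBasis, span_relator_image_compl_range_cableExponent]
  refine ⟨(relatorBasis hu).quotientSpanCompl cableExponent_injective, fun ⟨l, m, hm⟩ => ?_⟩
  simp [coe_relatorBasis, cableExponent, relator, not_lt.2 hm]

/-- Fix `q ≥ 1`.  Suppose for every `m` we are given `ρ m ∼ y^{q+m+1}`, i.e.
`ρ m = u_m • y^{q+m+1} + σ_m` with `u_m` a unit of `R` and `σ_m` in the `R`-span of
the monomials `x^i y^j z^k` with `j < q+m+1`.  Let `S` be the `R`-submodule of `F`
generated by the elements `x^i y^m z^k (z − x)` together with the elements `x^i ρ_m`.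
Then `F ⧸ S` is a free `R`-module with basis the images of the monomials
`{x^l y^m : l ≥ 0, 0 ≤ m ≤ q}`.  (Algebraic content of the paper's main theorem on
the Kauffman bracket skein module of a `q`-twist knot exterior.) -/
theorem skein_module_twist_knot_free (q : ℕ) (hq : 1 ≤ q) (ρ : ℕ → F)
    (hρ : ∀ m : ℕ, ∃ u : Rˣ,
      ρ m - (u : R) • (X 1 : F) ^ (q + m + 1) ∈
        Submodule.span R
          {p : F | ∃ i j k : ℕ, j < q + m + 1 ∧ p = X 0 ^ i * X 1 ^ j * X 2 ^ k})
    (S : Submodule R F)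
    (hS : S = Submodule.span R
        ({p : F | ∃ i m k : ℕ, p = X 0 ^ i * X 1 ^ m * X 2 ^ k * (X 2 - X 0)} ∪
         {p : F | ∃ i m : ℕ, p = X 0 ^ i * ρ m})) :
    ∃ b : Module.Basis (ℕ × {m : ℕ // m ≤ q}) R (F ⧸ S),
      ∀ lm : ℕ × {m : ℕ // m ≤ q},
        b lm = Submodule.Quotient.mk ((X 0 : F) ^ lm.1 * X 1 ^ (lm.2 : ℕ)) :=
  skein_module_twist_knot_free_general q ρ hρ S hS
end
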